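/- Let F and θ be integers with 1 ≤ θ and F > 2θ. For ρ ∈ (0, 2^{−F}), let μ_ρ be the probability distribution on the hypercube {0,1}^F defined by μ_ρ(u_−) = μ_ρ(u_+) = 1/2 − (2^{F−1} − 1)·ρ and μ_ρ(u) = ρ for every u ∉ {u_−, u_+}, where u_− = (0,…,0) and u_+ = (1,…,1). Let X and Y be independent random elements of {0,1}^F, each with distribution μ_ρ, and let h_θ(j) := −j for 0 ≤ j ≤ θ and h_θ(j) := j − 2θ for θ < j ≤ F. Then there exists ρ₀ ∈ (0, 2^{−F}] such that for every ρ ∈ (0, ρ₀), E[h_θ(H(X,Y))] > 0. -/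

import Mathlib

open MeasureTheory ProbabilityTheory

/-- Hamming distance on the hypercube `{0,1}^F`. -/
def hammingDist' {F : ℕ} (u v : Fin F → Bool) : ℕ :=
  (Finset.univ.filter fun i => u i ≠ v i).card

/-- The biased distribution on `{0,1}^F`: the two opposite profiles `u₋ = (0,…,0)` and
`u₊ = (1,…,1)` have mass `1/2 − (2^{F−1} − 1)ρ`, every other profile has mass `ρ`. -/
noncomputable def biasedDist (F : ℕ) (ρ : ℝ) (u : Fin F → Bool) : ℝ :=
  if u = (fun _ => false) ∨ u = (fun _ => true) then
    1/2 - ((2 : ℝ) ^ (F - 1) - 1) * ρ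
  else ρ

/-- The weight function `h_θ`. -/
noncomputable def hWeight (θ j : ℕ) : ℝ :=
  if j ≤ θ then -(j : ℝ) else (j : ℝ) - 2 * (θ : ℝ)

/-! The expected weight is a polynomial in `ρ`, hence continuous. At `ρ = 0` all the mass sits
on `u₋` and `u₊`, at Hamming distance `0` from themselves and `F` from each other, so the
expected weight there is `h_θ(F) / 2 = (F - 2θ) / 2 > 0`, and it stays positive for small `ρ`. -/

section

variable {Ω α β : Type*} [MeasurableSpace Ω] {μ : Measure Ω} [IsFiniteMeasure μ]
  [Fintype α] [MeasurableSpace α] [MeasurableSingletonClass α]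
  [Fintype β] [MeasurableSpace β] [MeasurableSingletonClass β]

theorem integral_comp_eq_sum_of_indepFun {X : Ω → α} {Y : Ω → β} (hX : Measurable X)
    (hY : Measurable Y) (hXY : IndepFun X Y μ) (f : α → β → ℝ) :
    ∫ ω, f (X ω) (Y ω) ∂μ = ∑ a, ∑ b, μ.real (X ⁻¹' {a}) * μ.real (Y ⁻¹' {b}) * f a b := by
  have hXY' : Measurable fun ω => (X ω, Y ω) := hX.prodMk hY
  rw [← integral_map (f := fun p : α × β => f p.1 p.2) hXY'.aemeasurable
      (measurable_of_countable _).aestronglyMeasurable,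
    integral_fintype .of_finite, Fintype.sum_prod_type]
  refine Finset.sum_congr rfl fun a _ => Finset.sum_congr rfl fun b _ => ?_
  have hpre : (fun ω => (X ω, Y ω)) ⁻¹' {(a, b)} = X ⁻¹' {a} ∩ Y ⁻¹' {b} := by
    ext ω; simp [Prod.ext_iff]
  rw [map_measureReal_apply hXY' (measurableSet_singleton _), hpre, measureReal_def,
    hXY.measure_inter_preimage_eq_mul _ _ (measurableSet_singleton a) (measurableSet_singleton b),
    ENNReal.toReal_mul, smul_eq_mul, measureReal_def, measureReal_def]

end

noncomputable def expectedWeight (F θ : ℕ) (ρ : ℝ) : ℝ :=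
  ∑ u, ∑ v, biasedDist F ρ u * biasedDist F ρ v * hWeight θ (hammingDist' u v)

@[fun_prop]
lemma continuous_biasedDist (F : ℕ) (u : Fin F → Bool) :
    Continuous fun ρ => biasedDist F ρ u := by
  unfold biasedDist
  split_ifs <;> fun_prop

lemma continuous_expectedWeight (F θ : ℕ) : Continuous (expectedWeight F θ) := by
  unfold expectedWeight
  fun_prop

lemma biasedDist_nonneg {F : ℕ} {ρ : ℝ} (hρ : 0 ≤ ρ) (hρF : ρ ≤ 1 / 2 ^ F) (u : Fin F → Bool) :
    0 ≤ biasedDist F ρ u := by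
  have hcoef : (2 : ℝ) ^ (F - 1) - 1 ≤ 2 ^ F / 2 := by
    cases F with
    | zero => norm_num
    | succ n => simp [pow_succ]
  have hmass : ((2 : ℝ) ^ (F - 1) - 1) * ρ ≤ 1 / 2 :=
    calc ((2 : ℝ) ^ (F - 1) - 1) * ρ ≤ 2 ^ F / 2 * ρ := mul_le_mul_of_nonneg_right hcoef hρ
      _ ≤ 2 ^ F / 2 * (1 / 2 ^ F) := by gcongr
      _ = 1 / 2 := by field_simp
  unfold biasedDist
  split_ifs <;> linarith

lemma sum_biasedDist_zero_mul {F : ℕ} (hF : 0 < F) (g : (Fin F → Bool) → ℝ) :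
    ∑ u, biasedDist F 0 u * g u = (g (fun _ => false) + g (fun _ => true)) / 2 := by
  have hne : (fun _ : Fin F => false) ≠ (fun _ => true) := fun h => by
    simpa using congrFun h ⟨0, hF⟩
  rw [Fintype.sum_eq_add _ _ hne fun u hu => by simp [biasedDist, hu]]
  simp only [biasedDist, true_or, or_true, ↓reduceIte, mul_zero, sub_zero]
  ring

lemma expectedWeight_zero {F θ : ℕ} (hθF : θ < F) :
    expectedWeight F θ 0 = ((F : ℝ) - 2 * θ) / 2 := by
  simp_rw [expectedWeight, mul_assoc, ← Finset.mul_sum,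
    sum_biasedDist_zero_mul (Nat.zero_lt_of_lt hθF)]
  simp [hammingDist', hWeight, hθF.not_ge]

theorem biased_expected_weight_pos_general (F θ : ℕ) (hF : 2 * θ < F) :
    ∃ ρ₀ : ℝ, 0 < ρ₀ ∧ ρ₀ ≤ 1 / 2 ^ F ∧
      ∀ ρ : ℝ, 0 < ρ → ρ < ρ₀ →
        ∀ (Ω : Type*) [MeasureSpace Ω], IsProbabilityMeasure (ℙ : Measure Ω) →
          ∀ X Y : Ω → (Fin F → Bool), Measurable X → Measurable Y → IndepFun X Y →
            (∀ u, ℙ (X ⁻¹' {u}) = ENNReal.ofReal (biasedDist F ρ u)) →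
            (∀ u, ℙ (Y ⁻¹' {u}) = ENNReal.ofReal (biasedDist F ρ u)) →
            0 < ∫ ω, hWeight θ (hammingDist' (X ω) (Y ω)) ∂ℙ := by
  have hpos : 0 < expectedWeight F θ 0 := by
    rw [expectedWeight_zero (by omega)]
    have : (2 * θ : ℝ) < F := by exact_mod_cast hF
    linarith
  obtain ⟨ε, hε, hnear⟩ := Metric.eventually_nhds_iff.1
    ((continuous_expectedWeight F θ).continuousAt.eventually (lt_mem_nhds hpos))
  refine ⟨min ε (1 / 2 ^ F), lt_min hε (by positivity), min_le_right _ _, ?_⟩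
  intro ρ hρ hρ₀ Ω _ _ X Y hX hY hXY hXlaw hYlaw
  have hρF : ρ ≤ 1 / 2 ^ F := hρ₀.le.trans (min_le_right _ _)
  have hreal : ∀ u, ENNReal.toReal (ENNReal.ofReal (biasedDist F ρ u)) = biasedDist F ρ u :=
    fun u => ENNReal.toReal_ofReal (biasedDist_nonneg hρ.le hρF u)
  rw [integral_comp_eq_sum_of_indepFun hX hY hXY fun u v => hWeight θ (hammingDist' u v)]
  simp only [measureReal_def, hXlaw, hYlaw, hreal]
  refine hnear ?_
  rw [Real.dist_eq, sub_zero, abs_of_pos hρ]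
  exact hρ₀.trans_le (min_le_left _ _)

theorem biased_expected_weight_pos (F θ : ℕ) (hθ : 1 ≤ θ) (hF : 2 * θ < F) :
    ∃ ρ₀ : ℝ, 0 < ρ₀ ∧ ρ₀ ≤ 1 / 2 ^ F ∧
      ∀ ρ : ℝ, 0 < ρ → ρ < ρ₀ →
        ∀ (Ω : Type*) [MeasureSpace Ω], IsProbabilityMeasure (ℙ : Measure Ω) →
          ∀ X Y : Ω → (Fin F → Bool), Measurable X → Measurable Y → IndepFun X Y →
            (∀ u, ℙ (X ⁻¹' {u}) = ENNReal.ofReal (biasedDist F ρ u)) →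
            (∀ u, ℙ (Y ⁻¹' {u}) = ENNReal.ofReal (biasedDist F ρ u)) →
            0 < ∫ ω, hWeight θ (hammingDist' (X ω) (Y ω)) ∂ℙ :=
  biased_expected_weight_pos_general F θ hF
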